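/- arXiv:2003.14270 — 3 statements merged into one kernel-verified Lean document; each statement's English description precedes it below -/
import Mathlib

section
/- Suppose that for every δ with 0 < δ < 1 there exists ε > 0 such that for all subsets A, B of a fixed non-abelian finite simple group G with B normal (closed under conjugation) and |A| ≤ |G|^δ one has |AB| ≥ |A|·|B|^ε. Then for that same ε and any normal subsets A₁,…,A_t of G with t ≥ 2 and |A₁⋯A_{t−1}| ≤ |G|^δ, one has |A₁⋯A_t| ≥ (|A₁|⋯|A_t|)^ε. -/
open scoped Pointwise

theorem stmt_7 {G : Type*} [Group G] [Fintype G] [DecidableEq G] [IsSimpleGroup G]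
    (hna : ¬ ∀ a b : G, a * b = b * a)
    (δ ε : ℝ) (hδ0 : 0 < δ) (hδ1 : δ < 1) (hε : 0 < ε)
    (H : ∀ A B : Finset G, (∀ g b : G, b ∈ B → g * b * g⁻¹ ∈ B) →
      (A.card : ℝ) ≤ (Fintype.card G : ℝ) ^ δ →
      (A.card : ℝ) * (B.card : ℝ) ^ ε ≤ ((A * B).card : ℝ))
    (t : ℕ) (ht : 2 ≤ t) (A : ℕ → Finset G)
    (hnorm : ∀ i, ∀ g a : G, a ∈ A i → g * a * g⁻¹ ∈ A i)
    (hsmall : (((List.range (t - 1)).map A).prod.card : ℝ) ≤ (Fintype.card G : ℝ) ^ δ) :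
    (((List.range t).map fun i => ((A i).card : ℝ)).prod) ^ ε ≤
      (((List.range t).map A).prod.card : ℝ) := by
  set P : ℕ → Finset G := fun k => ((List.range k).map A).prod with hP
  have hPsucc : ∀ k, P (k + 1) = P k * A k := by
    intro k
    simp [hP, List.range_succ]
  -- case split on whether some A i (i < t) is empty
  by_cases hne : ∀ i < t, (A i).Nonempty
  · -- monotonicity of cards of prefixes
    have hmono : ∀ k m : ℕ, k ≤ m → m ≤ t → (P k).card ≤ (P m).card := by
      intro k m hkm hmt
      induction m with
      | zero =>
        have : k = 0 := by omega
        simp [this]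
      | succ n ih =>
        rcases Nat.lt_or_ge k (n + 1) with h | h
        · have h1 : (P k).card ≤ (P n).card := ih (by omega) (by omega)
          have h2 : (P n).card ≤ (P (n + 1)).card := by
            rw [hPsucc]
            exact Finset.card_le_card_mul_right (hne n (by omega))
          omega
        · have : k = n + 1 := by omega
          simp [this]
    -- main induction
    have main : ∀ k, 1 ≤ k → k ≤ t →
        (((List.range k).map fun i => ((A i).card : ℝ)).prod) ^ ε ≤ ((P k).card : ℝ) := by
      intro k
      induction k with
      | zero => omega
      | succ n ih =>
        intro _ hkt
        rcases Nat.eq_zero_or_pos n with hn | hn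
        · subst hn
          have h0 : (A 0).Nonempty := hne 0 (by omega)
          have h1 : ((Finset.card {(1 : G)} : ℝ)) ≤ (Fintype.card G : ℝ) ^ δ := by
            have : (1 : ℝ) ≤ (Fintype.card G : ℝ) ^ δ :=
              Real.one_le_rpow (by exact_mod_cast Fintype.card_pos) hδ0.le
            simpa using this
          have h3 := H {1} (A 0) (by
            intro g b hb
            simpa using hnorm 0 g b hb) h1
          have h2 : ({(1 : G)} : Finset G) * A 0 = A 0 := by
            rw [show ({(1 : G)} : Finset G) = 1 from rfl, one_mul]
          rw [h2, Finset.card_singleton, Nat.cast_one, one_mul] at h3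
          simpa [hP, List.range_succ] using h3
        · have hprev := ih hn (by omega)
          have hsmallP : ((P n).card : ℝ) ≤ (Fintype.card G : ℝ) ^ δ := by
            refine le_trans ?_ hsmall
            exact_mod_cast hmono n (t - 1) (by omega) (by omega)
          have hstep := H (P n) (A n) (fun g b hb => hnorm n g b hb) hsmallP
          rw [← hPsucc] at hstep
          have hAn0 : (0 : ℝ) ≤ ((A n).card : ℝ) := by positivity
          have hprod0 : (0 : ℝ) ≤ ((List.range n).map fun i => ((A i).card : ℝ)).prod := by
            apply List.prod_nonneg
            intro x hx
            simp only [List.mem_map] at hx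
            obtain ⟨i, _, rfl⟩ := hx
            positivity
          calc (((List.range (n + 1)).map fun i => ((A i).card : ℝ)).prod) ^ ε
              = ((((List.range n).map fun i => ((A i).card : ℝ)).prod) * ((A n).card : ℝ)) ^ ε := by
                rw [List.range_succ]; simp
            _ = (((List.range n).map fun i => ((A i).card : ℝ)).prod) ^ ε * ((A n).card : ℝ) ^ ε :=
                Real.mul_rpow hprod0 hAn0
            _ ≤ ((P n).card : ℝ) * ((A n).card : ℝ) ^ ε := by
                apply mul_le_mul_of_nonneg_right hprev (Real.rpow_nonneg hAn0 ε)
            _ ≤ ((P (n + 1)).card : ℝ) := hstep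
    exact main t (by omega) le_rfl
  · -- some A i is empty: LHS is 0
    push_neg at hne
    obtain ⟨i, hit, hAi⟩ := hne
    have h0 : ((List.range t).map fun i => ((A i).card : ℝ)).prod = 0 := by
      apply List.prod_eq_zero
      simp only [List.mem_map]
      exact ⟨i, by simpa using hit, by simp [hAi]⟩
    rw [h0, Real.zero_rpow hε.ne']
    positivity
end

section
/- Assume ε > 0 and 0 < δ < 1 are such that for all normal subsets A₁,…,A_t of a non-abelian finite simple group G with |A₁⋯A_{t−1}| ≤ |G|^δ one has |A₁⋯A_t| ≥ (∏|A_i|)^ε. If A₁,…,A_j are normal subsets of G and t is the least index with |A₁|⋯|A_t| > |G|^{1/ε}, then |A₁⋯A_t| ≥ |G|^δ. -/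
open scoped Pointwise

theorem stmt_8 {G : Type*} [Group G] [Fintype G] [DecidableEq G] [IsSimpleGroup G]
    (hna : ¬ ∀ a b : G, a * b = b * a)
    (δ ε : ℝ) (hδ0 : 0 < δ) (hδ1 : δ < 1) (hε : 0 < ε)
    (H : ∀ t : ℕ, 2 ≤ t → ∀ A : ℕ → Finset G,
      (∀ i, ∀ g a : G, a ∈ A i → g * a * g⁻¹ ∈ A i) →
      (((List.range (t - 1)).map A).prod.card : ℝ) ≤ (Fintype.card G : ℝ) ^ δ →
      (((List.range t).map fun i => ((A i).card : ℝ)).prod) ^ ε ≤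
        (((List.range t).map A).prod.card : ℝ))
    (j : ℕ) (A : ℕ → Finset G)
    (hnorm : ∀ i, ∀ g a : G, a ∈ A i → g * a * g⁻¹ ∈ A i)
    (t : ℕ) (ht : t ≤ j)
    (hgt : (Fintype.card G : ℝ) ^ (1 / ε) <
      ((List.range t).map fun i => ((A i).card : ℝ)).prod)
    (hleast : ∀ s < t, ((List.range s).map fun i => ((A i).card : ℝ)).prod ≤
      (Fintype.card G : ℝ) ^ (1 / ε)) :
    (Fintype.card G : ℝ) ^ δ ≤ (((List.range t).map A).prod.card : ℝ) := by
  have hG0 : (0:ℝ) < (Fintype.card G : ℝ) := by exact_mod_cast Fintype.card_pos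
  have hG1 : (1:ℝ) ≤ (Fintype.card G : ℝ) := by exact_mod_cast Fintype.card_pos
  have hGpow1 : (1:ℝ) ≤ (Fintype.card G : ℝ) ^ (1/ε) :=
    Real.one_le_rpow hG1 (by positivity)
  have hδG : (Fintype.card G : ℝ) ^ δ ≤ (Fintype.card G : ℝ) := by
    nth_rewrite 2 [← Real.rpow_one (Fintype.card G : ℝ)]
    exact Real.rpow_le_rpow_of_exponent_le hG1 hδ1.le
  have hpow : ((Fintype.card G : ℝ) ^ (1/ε)) ^ ε = (Fintype.card G : ℝ) := by
    rw [← Real.rpow_mul hG0.le, one_div_mul_cancel hε.ne', Real.rpow_one]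
  -- bound: any product of normal sets, its card is at most |G|
  have hcardle : ∀ S : Finset G, ((S.card : ℝ)) ≤ (Fintype.card G : ℝ) := by
    intro S; exact_mod_cast Finset.card_le_univ S
  -- t ≥ 1
  have ht1 : 1 ≤ t := by
    rcases Nat.eq_zero_or_pos t with h | h
    · subst h
      simp only [List.range_zero, List.map_nil, List.prod_nil] at hgt
      linarith
    · exact h
  obtain ⟨s, rfl⟩ : ∃ s, t = s + 1 := ⟨t - 1, (Nat.succ_pred_eq_of_pos ht1).symm⟩
  rcases Nat.eq_zero_or_pos s with hs | hs
  · -- t = 1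
    subst hs
    have hr1 : List.range 1 = [0] := rfl
    rw [hr1] at hgt ⊢
    simp only [List.map_cons, List.map_nil, List.prod_singleton] at hgt ⊢
    by_cases h0 : ((A 0).card : ℝ) ≤ (Fintype.card G : ℝ) ^ δ
    · -- contradiction via H with t = 2 and A' = [A 0, {1}]
      exfalso
      set A' : ℕ → Finset G := fun i => if i = 0 then A 0 else {1} with hA'
      have hnorm' : ∀ i, ∀ g a : G, a ∈ A' i → g * a * g⁻¹ ∈ A' i := by
        intro i g a ha
        by_cases hi : i = 0
        · subst hi; simp only [hA', if_pos rfl] at ha ⊢; exact hnorm 0 g a ha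
        · simp only [hA', if_neg hi, Finset.mem_singleton] at ha ⊢
          subst ha; group
      have key := H 2 le_rfl A' hnorm' ?_
      · have hprodsets : ((List.range 2).map A').prod = A 0 := by
          show ([A' 0, A' 1]).prod = A 0
          simp [hA', Finset.singleton_one]
        have hprodcards : ((List.range 2).map fun i => ((A' i).card : ℝ)).prod
            = ((A 0).card : ℝ) := by
          show (((A' 0).card : ℝ) * (((A' 1).card : ℝ) * 1)) = _
          simp [hA']
        rw [hprodsets, hprodcards] at key
        -- (A0.card)^ε ≤ A0.card ≤ |G|, but (A0.card)^ε > |G|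
        have h1 : (Fintype.card G : ℝ) < ((A 0).card : ℝ) ^ ε := by
          calc (Fintype.card G : ℝ) = ((Fintype.card G : ℝ) ^ (1/ε)) ^ ε := hpow.symm
            _ < ((A 0).card : ℝ) ^ ε :=
              Real.rpow_lt_rpow (by positivity) hgt hε
        have h2 := hcardle (A 0)
        linarith
      · show ((((List.range 1).map A').prod.card : ℝ)) ≤ _
        have : ((List.range 1).map A').prod = A 0 := by
          show ([A' 0]).prod = A 0; simp [hA']
        rw [this]; exact h0
    · push_neg at h0; linarith
  · -- t = s + 1 ≥ 2
    by_cases hc : ((((List.range s).map A).prod.card : ℝ)) ≤ (Fintype.card G : ℝ) ^ δ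
    · have key := H (s+1) (by omega) A hnorm (by simpa using hc)
      have h1 : (Fintype.card G : ℝ) <
          (((List.range (s+1)).map fun i => ((A i).card : ℝ)).prod) ^ ε := by
        calc (Fintype.card G : ℝ) = ((Fintype.card G : ℝ) ^ (1/ε)) ^ ε := hpow.symm
          _ < _ := Real.rpow_lt_rpow (by positivity) hgt hε
      linarith
    · push_neg at hc
      -- A s is nonempty
      have hne : (A s).Nonempty := by
        rw [← Finset.card_pos]
        by_contra h
        push_neg at h
        have h' : ((A s).card : ℝ) = 0 := by
          have := Nat.le_zero.mp h; exact_mod_cast this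
        have hmem : (0:ℝ) ∈ (List.range (s+1)).map fun i => ((A i).card : ℝ) :=
          List.mem_map.2 ⟨s, List.mem_range.2 (by omega), h'⟩
        have hz := List.prod_eq_zero hmem
        rw [hz] at hgt
        linarith
      have hsplit : ((List.range (s+1)).map A).prod
          = ((List.range s).map A).prod * A s := by
        rw [List.range_succ, List.map_append, List.prod_append]
        simp
      rw [hsplit]
      have := Finset.card_le_card_mul_right (s := ((List.range s).map A).prod) hne
      calc (Fintype.card G : ℝ) ^ δ ≤ ((((List.range s).map A).prod.card : ℝ)) := hc.le
        _ ≤ _ := by exact_mod_cast this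
end

section
/- Suppose G is a finite group, S₁, S₂, S₃ ⊆ G, and every conjugacy class of G of size at least m is contained in S₁S₂. If moreover |S₃| > k(G)·m, where k(G) is the number of conjugacy classes of G and S₁S₂ is a normal subset, then S₁S₂S₃ = G. -/
open scoped Pointwise

theorem stmt_12 {G : Type*} [Group G] [Fintype G] [DecidableEq G]
    (S₁ S₂ S₃ : Finset G) (m : ℝ) (hm : 0 < m)
    (hclass : ∀ a : G, m ≤ ((Finset.univ.filter fun b => IsConj a b).card : ℝ) →
      (Finset.univ.filter fun b => IsConj a b) ⊆ S₁ * S₂)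
    (hnormal : ∀ g a : G, a ∈ S₁ * S₂ → g * a * g⁻¹ ∈ S₁ * S₂)
    (hS₃ : (Nat.card (ConjClasses G) : ℝ) * m < (S₃.card : ℝ)) :
    S₁ * S₂ * S₃ = Finset.univ := by
  classical
  set A : Finset G := S₁ * S₂ with hA
  set C : Finset G := Finset.univ \ A with hC
  -- each element of C has conjugacy class of size < m
  have hclassC : ∀ a ∈ C, ((Finset.univ.filter fun b => IsConj a b).card : ℝ) < m := by
    intro a ha
    by_contra h
    push_neg at h
    have := hclass a h (Finset.mem_filter.2 ⟨Finset.mem_univ a, IsConj.refl a⟩)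
    simp [hC, Finset.mem_sdiff] at ha
    exact ha this
  -- bound |C| ≤ k * m
  have hCbound : (C.card : ℝ) ≤ (Nat.card (ConjClasses G) : ℝ) * m := by
    have hsum := Finset.card_eq_sum_card_image (fun a => ConjClasses.mk a) C
    have hfiber : ∀ c ∈ C.image (fun a => ConjClasses.mk a),
        ((C.filter fun a => ConjClasses.mk a = c).card : ℝ) ≤ m := by
      intro c hc
      obtain ⟨a, haC, rfl⟩ := Finset.mem_image.1 hc
      have hsub : (C.filter fun b => ConjClasses.mk b = ConjClasses.mk a) ⊆
          Finset.univ.filter fun b => IsConj a b := by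
        intro b hb
        rw [Finset.mem_filter] at hb ⊢
        exact ⟨Finset.mem_univ b, (ConjClasses.mk_eq_mk_iff_isConj.1 hb.2).symm⟩
      calc ((C.filter fun b => ConjClasses.mk b = ConjClasses.mk a).card : ℝ)
          ≤ ((Finset.univ.filter fun b => IsConj a b).card : ℝ) := by
            exact_mod_cast Finset.card_le_card hsub
        _ ≤ m := le_of_lt (hclassC a haC)
    calc (C.card : ℝ)
        = ∑ c ∈ C.image (fun a => ConjClasses.mk a),
            ((C.filter fun a => ConjClasses.mk a = c).card : ℝ) := by
          rw [hsum]; push_cast; ring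
      _ ≤ ∑ _c ∈ C.image (fun a => ConjClasses.mk a), m :=
          Finset.sum_le_sum hfiber
      _ = ((C.image (fun a => ConjClasses.mk a)).card : ℝ) * m := by
          rw [Finset.sum_const, nsmul_eq_mul]
      _ ≤ (Nat.card (ConjClasses G) : ℝ) * m := by
          apply mul_le_mul_of_nonneg_right _ hm.le
          have : (C.image (fun a => ConjClasses.mk a)).card ≤ Fintype.card (ConjClasses G) :=
            Finset.card_le_univ _
          rw [Nat.card_eq_fintype_card]
          exact_mod_cast this
  -- hence |C| < |S₃|
  have hClt : C.card < S₃.card := by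
    have : (C.card : ℝ) < (S₃.card : ℝ) := lt_of_le_of_lt hCbound hS₃
    exact_mod_cast this
  -- so |A| + |S₃| > |G|
  have hcardA : A.card + C.card = Fintype.card G := by
    have h1 := Finset.card_le_univ A
    rw [hC, Finset.card_sdiff_of_subset (Finset.subset_univ A), Finset.card_univ]
    omega
  have hbig : Fintype.card G < A.card + S₃.card := by rw [← hcardA]; omega
  -- conclude A * S₃ = univ
  apply Finset.eq_univ_of_forall
  intro g
  have hinter : (A ∩ S₃.image fun b => g * b⁻¹).Nonempty := by
    by_contra h
    rw [Finset.not_nonempty_iff_eq_empty, ← Finset.disjoint_iff_inter_eq_empty] at h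
    have hcard : (A ∪ S₃.image fun b => g * b⁻¹).card = A.card + (S₃.image fun b => g * b⁻¹).card :=
      Finset.card_union_of_disjoint h
    have himg : (S₃.image fun b => g * b⁻¹).card = S₃.card := by
      apply Finset.card_image_of_injective
      intro x y hxy
      simpa using hxy
    have := Finset.card_le_univ (A ∪ S₃.image fun b => g * b⁻¹)
    rw [hcard, himg] at this
    omega
  obtain ⟨a, ha⟩ := hinter
  rw [Finset.mem_inter, Finset.mem_image] at ha
  obtain ⟨haA, b, hbS, hab⟩ := ha
  have : a * b = g := by rw [← hab]; group
  exact this ▸ Finset.mul_mem_mul haA hbS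
end
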